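/- arXiv:2106.12022 — 5 statements merged into one kernel-verified Lean document; each statement's English description precedes it below -/
import Mathlib

section
/- Let a, b > 0 be real numbers and let p, q be real numbers with 0 ≤ p < q. Then the function f : [0,∞) → ℝ defined by f(A) = A·(q·A + p·a) / ((A + a)·(A + b)) is strictly increasing on [0,∞). -/
/-!
Splitting the numerator as `q A² + p a A = p A (A + a) + (q - p) A²` writes the function as
`p · A/(A+b) + (q - p) · (A/(A+a)) · (A/(A+b))`. Each `A ↦ A/(A+c)` with `c > 0` is strictly
increasing and nonnegative on `[0, ∞)`, so the first summand is monotone (as `p ≥ 0`) and the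
second strictly increasing (as `q - p > 0`).
-/

lemma StrictMonoOn.mul_of_nonneg {α M₀ : Type*} [MulZeroClass M₀] [Preorder M₀]
    [PosMulStrictMono M₀] [MulPosMono M₀] [Preorder α] {f g : α → M₀} {s : Set α}
    (hf : StrictMonoOn f s) (hg : StrictMonoOn g s)
    (hf₀ : ∀ x ∈ s, 0 ≤ f x) (hg₀ : ∀ x ∈ s, 0 ≤ g x) :
    StrictMonoOn (fun x => f x * g x) s :=
  fun _ hx _ hy h => mul_lt_mul'' (hf hx hy h) (hg hx hy h) (hf₀ _ hx) (hg₀ _ hx)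

section DivAddConst

variable {K : Type*} [Field K] [LinearOrder K] [IsStrictOrderedRing K] {c : K}

lemma strictMonoOn_div_add_const (hc : 0 < c) :
    StrictMonoOn (fun x : K => x / (x + c)) (Set.Ioi (-c)) := by
  intro x hx y hy hxy
  simp only [Set.mem_Ioi] at hx hy
  rw [div_lt_div_iff₀ (by linarith) (by linarith)]
  linarith [mul_lt_mul_of_pos_right hxy hc]

lemma div_add_const_nonneg (hc : 0 < c) {x : K} (hx : 0 ≤ x) : 0 ≤ x / (x + c) :=
  div_nonneg hx (by linarith)

end DivAddConst

lemma mfl_rhs_eq {A a b p q : ℝ} (ha : A + a ≠ 0) (hb : A + b ≠ 0) :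
    A * (q * A + p * a) / ((A + a) * (A + b)) =
      (q - p) * (A / (A + a) * (A / (A + b))) + p * (A / (A + b)) := by
  field_simp
  ring

/-- The rational function `A ↦ A(qA + pa)/((A+a)(A+b))` appearing in the
MFL steady-state equation is strictly increasing on `[0, ∞)` when
`a, b > 0` and `0 ≤ p < q`. -/
theorem mfl_rhs_strictMonoOn (a b p q : ℝ)
    (ha : 0 < a) (hb : 0 < b) (hp : 0 ≤ p) (hpq : p < q) :
    StrictMonoOn (fun A : ℝ => A * (q * A + p * a) / ((A + a) * (A + b)))
      (Set.Ici 0) := by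
  have hfa := (strictMonoOn_div_add_const ha).mono (Set.Ici_subset_Ioi.2 (neg_lt_zero.2 ha))
  have hfb := (strictMonoOn_div_add_const hb).mono (Set.Ici_subset_Ioi.2 (neg_lt_zero.2 hb))
  have hprod := hfa.mul_of_nonneg hfb (fun _ => div_add_const_nonneg ha)
    (fun _ => div_add_const_nonneg hb)
  have hsum := ((strictMono_mul_left_of_pos (sub_pos.2 hpq)).comp_strictMonoOn hprod).add_monotone
    ((monotone_mul_left_of_nonneg hp).comp_monotoneOn hfb.monotoneOn)
  exact hsum.congr fun A (hA : 0 ≤ A) => (mfl_rhs_eq (by positivity) (by positivity)).symm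
end

section
/- Let θ₁ > 0, κ ≥ 0, and let ρ₀, ρ₂, ρ₁ be real numbers with ρ₀ < 1, ρ₂ < 1, and ρ₁ > max(ρ₀, ρ₂). Define t₂^{MFL} = 2 + (ρ₁ − ρ₀)/(θ₁·(1 − ρ₀)) and t₂^{IT-MFL} = 2 + (ρ₁ − ρ₀ + κ·(ρ₁ − ρ₂))/(θ₁·(1 − ρ₀ + κ·(1 − ρ₂))·(1 + κ)). Then t₂^{IT-MFL} ≤ t₂^{MFL} + C, where C = ((ρ₁ − ρ₂)/θ₁)·min(κ/(1 − ρ₀), 1/(1 − ρ₂)). -/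
/-! Write `a = ρ₁ - ρ₀`, `b = ρ₁ - ρ₂`, `p = 1 - ρ₀`, `q = 1 - ρ₂` and `D = (p + κ q)(1 + κ)`.
After factoring out `1/θ₁` the claim is `(a + κ b)/D ≤ a/p + b · min (κ/p) (1/q)`, which splits
termwise: `a/D ≤ a/p` because `p ≤ D`, and `κ/D` is at most both `κ/p` and `1/q` because
`D` dominates both `p` and `κ q`. -/

section

variable {p q κ : ℝ}

lemma le_add_mul_mul_one_add (hp : 0 ≤ p) (hq : 0 ≤ q) (hκ : 0 ≤ κ) :
    p ≤ (p + κ * q) * (1 + κ) := by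
  nlinarith [mul_nonneg hκ hq, mul_nonneg hp hκ, mul_nonneg (mul_nonneg hκ hq) hκ]

lemma mul_le_add_mul_mul_one_add (hp : 0 ≤ p) (hq : 0 ≤ q) (hκ : 0 ≤ κ) :
    κ * q ≤ (p + κ * q) * (1 + κ) := by
  nlinarith [mul_nonneg hκ hq, mul_nonneg hp hκ, mul_nonneg (mul_nonneg hκ hq) hκ]

lemma div_add_mul_mul_one_add_le_min (hp : 0 < p) (hq : 0 < q) (hκ : 0 ≤ κ) :
    κ / ((p + κ * q) * (1 + κ)) ≤ min (κ / p) (1 / q) := by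
  refine le_min (div_le_div_of_nonneg_left hκ hp (le_add_mul_mul_one_add hp.le hq.le hκ)) ?_
  have hD : 0 < (p + κ * q) * (1 + κ) := by positivity
  rw [div_le_div_iff₀ hD hq, one_mul]
  exact mul_le_add_mul_mul_one_add hp.le hq.le hκ

lemma add_mul_div_add_mul_mul_one_add_le {a b : ℝ} (ha : 0 ≤ a) (hb : 0 ≤ b)
    (hp : 0 < p) (hq : 0 < q) (hκ : 0 ≤ κ) :
    (a + κ * b) / ((p + κ * q) * (1 + κ)) ≤ a / p + b * min (κ / p) (1 / q) := by
  have hκb : κ * b / ((p + κ * q) * (1 + κ)) ≤ b * min (κ / p) (1 / q) := by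
    rw [mul_comm κ, mul_div_assoc]
    exact mul_le_mul_of_nonneg_left (div_add_mul_mul_one_add_le_min hp hq hκ) hb
  rw [add_div]
  exact add_le_add
    (div_le_div_of_nonneg_left ha hp (le_add_mul_mul_one_add hp.le hq.le hκ)) hκb

end

/-- Remark 2: the IT-MFL period estimate is controlled by the MFL period
estimate up to the explicit constant `C`. -/
theorem t2_controlled (θ₁ κ ρ₀ ρ₂ ρ₁ : ℝ)
    (hθ₁ : 0 < θ₁) (hκ : 0 ≤ κ) (hρ₀ : ρ₀ < 1) (hρ₂ : ρ₂ < 1)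
    (hρ₁ : ρ₁ > max ρ₀ ρ₂) :
    let t₂MFL := 2 + (ρ₁ - ρ₀) / (θ₁ * (1 - ρ₀))
    let t₂IT := 2 + (ρ₁ - ρ₀ + κ * (ρ₁ - ρ₂)) /
      (θ₁ * (1 - ρ₀ + κ * (1 - ρ₂)) * (1 + κ))
    let C := (ρ₁ - ρ₂) / θ₁ * min (κ / (1 - ρ₀)) (1 / (1 - ρ₂))
    t₂IT ≤ t₂MFL + C := by
  intro t₂MFL t₂IT C
  obtain ⟨hρ₀₁, hρ₂₁⟩ := max_lt_iff.mp hρ₁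
  have key := add_mul_div_add_mul_mul_one_add_le (sub_nonneg.mpr hρ₀₁.le)
    (sub_nonneg.mpr hρ₂₁.le) (sub_pos.mpr hρ₀) (sub_pos.mpr hρ₂) hκ
  show 2 + _ ≤ 2 + _ + _
  rw [add_assoc, add_le_add_iff_left]
  calc (ρ₁ - ρ₀ + κ * (ρ₁ - ρ₂)) / (θ₁ * (1 - ρ₀ + κ * (1 - ρ₂)) * (1 + κ))
      = (ρ₁ - ρ₀ + κ * (ρ₁ - ρ₂)) / ((1 - ρ₀ + κ * (1 - ρ₂)) * (1 + κ)) / θ₁ := by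
        rw [mul_assoc, div_mul_eq_div_div_swap]
    _ ≤ ((ρ₁ - ρ₀) / (1 - ρ₀) + (ρ₁ - ρ₂) * min (κ / (1 - ρ₀)) (1 / (1 - ρ₂))) / θ₁ :=
      div_le_div_of_nonneg_right key hθ₁.le
    _ = (ρ₁ - ρ₀) / (θ₁ * (1 - ρ₀)) + (ρ₁ - ρ₂) / θ₁ * min (κ / (1 - ρ₀)) (1 / (1 - ρ₂)) := by
      rw [add_div, div_div, mul_comm (1 - ρ₀), div_mul_eq_mul_div]
end

section
/- Let K₁ > 0, K₂ ≥ 0, K_d > 0, A_tot > 0, g_tot > 0, and B_tot ≥ 0. Define the cubic polynomial Φ(x) = a·x³ + b·x² + c·x + d with coefficients a = K₁, b = 1 + K₂ + (g_tot + B_tot − A_tot + K_d)·K₁, c = (1 + K₂)·(B_tot − A_tot + K_d) + (g_tot − A_tot)·K_d·K₁, d = −(1 + K₂)·A_tot·K_d. Then Φ has exactly one root in (0,∞). -/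
/-! Dividing `Φ(x)` by the positive factor `(K_d + x)(1 + K₂ + K₁ x)` turns `Φ(x) = 0` into the
activator conservation law `x + B_tot x / (K_d + x) + g_tot K₁ x / (1 + K₂ + K₁ x) = A_tot`:
free activator plus activator bound to the target plus activator bound to the promoter.
The left-hand side is continuous and strictly increasing on `[0, ∞)`, vanishes at `0` and is
at least `A_tot` at `A_tot`, so it takes the value `A_tot` exactly once on `(0, ∞)`. -/

open Set

lemma monotoneOn_mul_div_add {b k : ℝ} (hb : 0 ≤ b) (hk : 0 ≤ k) :
    MonotoneOn (fun x => b * x / (k + x)) (Ioi (-k)) := by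
  intro x hx y hy hxy
  have hx' : 0 < k + x := neg_lt_iff_pos_add'.mp hx
  have hy' : 0 < k + y := neg_lt_iff_pos_add'.mp hy
  rw [div_le_div_iff₀ hx' hy']
  nlinarith [mul_nonneg (mul_nonneg hb hk) (sub_nonneg.mpr hxy)]

lemma existsUnique_mem_Ioi_eq_of_strictMonoOn {g : ℝ → ℝ} {c b : ℝ}
    (hcont : ContinuousOn g (Ici 0)) (hmono : StrictMonoOn g (Ici 0))
    (h0 : g 0 < c) (hb : 0 ≤ b) (hc : c ≤ g b) :
    ∃! x, x ∈ Ioi 0 ∧ g x = c := by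
  obtain ⟨x, ⟨hx0, -⟩, hx⟩ :=
    intermediate_value_Icc hb (hcont.mono Icc_subset_Ici_self) ⟨h0.le, hc⟩
  have hxpos : 0 < x := hx0.lt_of_ne (by rintro rfl; exact h0.ne hx)
  refine ⟨x, ⟨hxpos, hx⟩, fun y ⟨hy, hgy⟩ => ?_⟩
  exact hmono.injOn (mem_Ici.mpr hy.le) (mem_Ici.mpr hxpos.le) (hgy.trans hx.symm)

section QSS

variable (K₁ K₂ Kd Atot gtot Btot : ℝ)

def qssCubic (x : ℝ) : ℝ :=
  K₁ * x ^ 3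
    + (1 + K₂ + (gtot + Btot - Atot + Kd) * K₁) * x ^ 2
    + ((1 + K₂) * (Btot - Atot + Kd) + (gtot - Atot) * Kd * K₁) * x
    + (-((1 + K₂) * Atot * Kd))

noncomputable def totalActivator (x : ℝ) : ℝ :=
  x + Btot * x / (Kd + x) + gtot * (K₁ * x) / (1 + K₂ + K₁ * x)

variable {K₁ K₂ Kd Atot gtot Btot}

lemma qssCubic_eq_mul_totalActivator_sub {x : ℝ} (hx₁ : Kd + x ≠ 0)
    (hx₂ : 1 + K₂ + K₁ * x ≠ 0) :
    qssCubic K₁ K₂ Kd Atot gtot Btot x =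
      (Kd + x) * (1 + K₂ + K₁ * x) * (totalActivator K₁ K₂ Kd gtot Btot x - Atot) := by
  unfold qssCubic totalActivator
  field_simp
  ring

lemma qssCubic_eq_zero_iff (hK₁ : 0 ≤ K₁) (hK₂ : 0 ≤ K₂) (hKd : 0 < Kd) {x : ℝ} (hx : 0 ≤ x) :
    qssCubic K₁ K₂ Kd Atot gtot Btot x = 0 ↔ totalActivator K₁ K₂ Kd gtot Btot x = Atot := by
  have hx₁ : 0 < Kd + x := by positivity
  have hx₂ : 0 < 1 + K₂ + K₁ * x := by positivity
  rw [qssCubic_eq_mul_totalActivator_sub hx₁.ne' hx₂.ne', mul_eq_zero,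
    or_iff_right (by positivity), sub_eq_zero]

lemma totalActivator_zero : totalActivator K₁ K₂ Kd gtot Btot 0 = 0 := by
  simp [totalActivator]

lemma le_totalActivator_self (hK₁ : 0 ≤ K₁) (hK₂ : 0 ≤ K₂) (hKd : 0 < Kd)
    (hgtot : 0 ≤ gtot) (hBtot : 0 ≤ Btot) {x : ℝ} (hx : 0 ≤ x) :
    x ≤ totalActivator K₁ K₂ Kd gtot Btot x := by
  unfold totalActivator
  have htarget : 0 ≤ Btot * x / (Kd + x) := by positivity
  have hpromoter : 0 ≤ gtot * (K₁ * x) / (1 + K₂ + K₁ * x) := by positivity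
  linarith

lemma continuousOn_totalActivator (hK₁ : 0 ≤ K₁) (hK₂ : 0 ≤ K₂) (hKd : 0 < Kd) :
    ContinuousOn (totalActivator K₁ K₂ Kd gtot Btot) (Ici 0) := by
  unfold totalActivator
  fun_prop (disch := intro x hx; simp only [mem_Ici] at hx; positivity)

lemma strictMonoOn_totalActivator (hK₁ : 0 ≤ K₁) (hK₂ : 0 ≤ K₂) (hKd : 0 < Kd)
    (hgtot : 0 ≤ gtot) (hBtot : 0 ≤ Btot) :
    StrictMonoOn (totalActivator K₁ K₂ Kd gtot Btot) (Ici 0) := by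
  have htarget : MonotoneOn (fun x => Btot * x / (Kd + x)) (Ici 0) :=
    (monotoneOn_mul_div_add hBtot hKd.le).mono fun x hx => by
      simp only [mem_Ici, mem_Ioi] at hx ⊢; linarith
  have hpromoter : MonotoneOn (fun x => gtot * (K₁ * x) / (1 + K₂ + K₁ * x)) (Ici 0) := by
    intro x hx y hy hxy
    refine monotoneOn_mul_div_add hgtot (by positivity) ?_ ?_ (mul_le_mul_of_nonneg_left hxy hK₁)
      <;> simp only [mem_Ici, mem_Ioi] at hx hy ⊢ <;> nlinarith
  exact (strictMonoOn_id.add_monotone htarget).add_monotone hpromoter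

end QSS

/-- The cubic `Φ` determining the quasi-steady-state free-activator
concentration has exactly one root in `(0, ∞)`. -/
theorem qss_cubic_unique_pos_root (K₁ K₂ Kd Atot gtot Btot : ℝ)
    (hK₁ : 0 < K₁) (hK₂ : 0 ≤ K₂) (hKd : 0 < Kd)
    (hAtot : 0 < Atot) (hgtot : 0 < gtot) (hBtot : 0 ≤ Btot) :
    ∃! x : ℝ, x ∈ Set.Ioi (0 : ℝ) ∧
      K₁ * x ^ 3
        + (1 + K₂ + (gtot + Btot - Atot + Kd) * K₁) * x ^ 2
        + ((1 + K₂) * (Btot - Atot + Kd) + (gtot - Atot) * Kd * K₁) * x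
        + (-((1 + K₂) * Atot * Kd)) = 0 := by
  change ∃! x : ℝ, x ∈ Ioi 0 ∧ qssCubic K₁ K₂ Kd Atot gtot Btot x = 0
  have hroot_iff : ∀ x, (x ∈ Ioi 0 ∧ qssCubic K₁ K₂ Kd Atot gtot Btot x = 0) ↔
      (x ∈ Ioi 0 ∧ totalActivator K₁ K₂ Kd gtot Btot x = Atot) := fun x =>
    and_congr_right fun hx => qssCubic_eq_zero_iff hK₁.le hK₂ hKd (le_of_lt hx)
  rw [existsUnique_congr hroot_iff]
  exact existsUnique_mem_Ioi_eq_of_strictMonoOn (continuousOn_totalActivator hK₁.le hK₂ hKd)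
    (strictMonoOn_totalActivator hK₁.le hK₂ hKd hgtot.le hBtot) (by simpa [totalActivator_zero])
    hAtot.le (le_totalActivator_self hK₁.le hK₂ hKd hgtot.le hBtot hAtot.le)
end

section
/- Let K₁ > 0, K₂ ≥ 0, K_d > 0, A_tot > 0, g_tot > 0, and let ρ ≥ 0 satisfy ρ·K₂ < 1 + K₂. For B ≥ 0 let A_qss(B) be the unique positive root of the cubic Φ_B with coefficients a = K₁, b = 1 + K₂ + (g_tot + B − A_tot + K_d)·K₁, c = (1 + K₂)·(B − A_tot + K_d) + (g_tot − A_tot)·K_d·K₁, d = −(1 + K₂)·A_tot·K_d, and define the transcription function T(B) = (A_qss(B)·K₁ / (1 + K₂ + A_qss(B)·K₁))·(1 − ρ·K₂/(1 + K₂)) + ρ·K₂/(1 + K₂). Then T is strictly decreasing on [0,∞). -/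
/-!
Clearing denominators turns the cubic `Φ_B(A) = 0` into the conservation law
`A + B · A / (K_d + A) + g_tot · K₁A / (1 + K₂ + K₁A) = A_tot` for the activator
(free, bound to the target, bound to the promoter). Its left side increases strictly in `B`
and weakly in `A`, so `A_qss` is strictly decreasing; and `T` is an increasing affine image
of the promoter occupancy `K₁A / (1 + K₂ + K₁A)`, which increases strictly in `A`.
-/

open Set

namespace ITMFL

theorem strictMonoOn_div_add_self {K : ℝ} (hK : 0 < K) :
    StrictMonoOn (fun x : ℝ => x / (K + x)) (Ioi (-K)) := by
  intro x hx y hy hxy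
  simp only [mem_Ioi] at hx hy
  rw [div_lt_div_iff₀ (by linarith) (by linarith)]
  nlinarith

variable (K₁ K₂ Kd Atot gtot : ℝ)

/-- The cubic `Φ_B` whose positive root is `A_qss(B)`. -/
def qssCubic (B A : ℝ) : ℝ :=
  K₁ * A ^ 3 + (1 + K₂ + (gtot + B - Atot + Kd) * K₁) * A ^ 2
    + ((1 + K₂) * (B - Atot + Kd) + (gtot - Atot) * Kd * K₁) * A
    + (-((1 + K₂) * Atot * Kd))

noncomputable def totalActivator (B A : ℝ) : ℝ :=
  A + B * (A / (Kd + A)) + gtot * (A * K₁ / (1 + K₂ + A * K₁))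

theorem qssCubic_eq_mul_totalActivator_sub {B A : ℝ} (hKd : Kd + A ≠ 0)
    (hK : 1 + K₂ + A * K₁ ≠ 0) :
    qssCubic K₁ K₂ Kd Atot gtot B A
      = (Kd + A) * (1 + K₂ + A * K₁) * (totalActivator K₁ K₂ Kd gtot B A - Atot) := by
  have htarget : A / (Kd + A) * (Kd + A) = A := div_mul_cancel₀ A hKd
  have hpromoter : A * K₁ / (1 + K₂ + A * K₁) * (1 + K₂ + A * K₁) = A * K₁ :=
    div_mul_cancel₀ _ hK
  unfold qssCubic totalActivator
  linear_combination (-(B * (1 + K₂ + A * K₁))) * htarget - gtot * (Kd + A) * hpromoter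

variable {K₁ K₂ Kd Atot gtot}

theorem totalActivator_eq_of_qssCubic_eq_zero (hK₁ : 0 < K₁) (hK₂ : 0 ≤ K₂) (hKd : 0 < Kd)
    {B A : ℝ} (hA : 0 < A) (hroot : qssCubic K₁ K₂ Kd Atot gtot B A = 0) :
    totalActivator K₁ K₂ Kd gtot B A = Atot := by
  have hKdA : 0 < Kd + A := by positivity
  have hden : 0 < 1 + K₂ + A * K₁ := by positivity
  rw [qssCubic_eq_mul_totalActivator_sub K₁ K₂ Kd Atot gtot hKdA.ne' hden.ne'] at hroot
  have := (mul_eq_zero.mp hroot).resolve_left (mul_pos hKdA hden).ne'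
  linarith

theorem totalActivator_lt (hK₁ : 0 < K₁) (hK₂ : 0 ≤ K₂) (hKd : 0 < Kd) (hgtot : 0 ≤ gtot)
    {B₁ B₂ A₁ A₂ : ℝ} (hB₁ : 0 ≤ B₁) (hB : B₁ < B₂) (hA₁ : 0 < A₁) (hA : A₁ ≤ A₂) :
    totalActivator K₁ K₂ Kd gtot B₁ A₁ < totalActivator K₁ K₂ Kd gtot B₂ A₂ := by
  have hA₂ : 0 < A₂ := hA₁.trans_le hA
  have htarget : A₁ / (Kd + A₁) ≤ A₂ / (Kd + A₂) :=
    (strictMonoOn_div_add_self hKd).monotoneOn (by simp only [mem_Ioi]; linarith)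
      (by simp only [mem_Ioi]; linarith) hA
  have hpromoter : A₁ * K₁ / (1 + K₂ + A₁ * K₁) ≤ A₂ * K₁ / (1 + K₂ + A₂ * K₁) :=
    (strictMonoOn_div_add_self (by linarith)).monotoneOn
      (by simp only [mem_Ioi]; nlinarith) (by simp only [mem_Ioi]; nlinarith)
      (mul_le_mul_of_nonneg_right hA hK₁.le)
  have hbound : B₁ * (A₁ / (Kd + A₁)) < B₂ * (A₂ / (Kd + A₂)) :=
    mul_lt_mul_of_lt_of_le_of_nonneg_of_pos hB htarget hB₁ (by positivity)
  unfold totalActivator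
  nlinarith [mul_le_mul_of_nonneg_left hpromoter hgtot]

theorem strictAntiOn_of_totalActivator_eq (hK₁ : 0 < K₁) (hK₂ : 0 ≤ K₂) (hKd : 0 < Kd)
    (hgtot : 0 ≤ gtot) {Aqss : ℝ → ℝ} (hpos : ∀ B, 0 ≤ B → 0 < Aqss B)
    (hcons : ∀ B, 0 ≤ B → totalActivator K₁ K₂ Kd gtot B (Aqss B) = Atot) :
    StrictAntiOn Aqss (Ici 0) := by
  intro B₁ hB₁ B₂ hB₂ hB
  by_contra! hA
  have := totalActivator_lt hK₁ hK₂ hKd hgtot hB₁ hB (hpos B₁ hB₁) hA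
  rw [hcons B₁ hB₁, hcons B₂ hB₂] at this
  exact this.false

end ITMFL

open ITMFL in
theorem transcription_strictAntiOn_general (K₁ K₂ Kd Atot gtot ρ : ℝ)
    (hK₁ : 0 < K₁) (hK₂ : 0 ≤ K₂) (hKd : 0 < Kd)
    (hgtot : 0 < gtot)
    (hρK₂ : ρ * K₂ < 1 + K₂)
    (Aqss : ℝ → ℝ)
    (hpos : ∀ B : ℝ, 0 ≤ B → 0 < Aqss B)
    (hroot : ∀ B : ℝ, 0 ≤ B →
      K₁ * (Aqss B) ^ 3
        + (1 + K₂ + (gtot + B - Atot + Kd) * K₁) * (Aqss B) ^ 2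
        + ((1 + K₂) * (B - Atot + Kd) + (gtot - Atot) * Kd * K₁) * (Aqss B)
        + (-((1 + K₂) * Atot * Kd)) = 0) :
    StrictAntiOn
      (fun B : ℝ =>
        (Aqss B * K₁ / (1 + K₂ + Aqss B * K₁)) * (1 - ρ * K₂ / (1 + K₂))
          + ρ * K₂ / (1 + K₂))
      (Set.Ici 0) := by
  have hAqss : StrictAntiOn Aqss (Ici 0) :=
    strictAntiOn_of_totalActivator_eq hK₁ hK₂ hKd hgtot.le hpos fun B hB =>
      totalActivator_eq_of_qssCubic_eq_zero hK₁ hK₂ hKd (hpos B hB) (hroot B hB)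
  have hslope : 0 < 1 - ρ * K₂ / (1 + K₂) := by
    rw [sub_pos, div_lt_one (by linarith)]
    exact hρK₂
  have hoccupancy : StrictMonoOn (fun A => A * K₁ / (1 + K₂ + A * K₁)) (Ioi 0) :=
    fun A hA A' hA' hlt => strictMonoOn_div_add_self (by linarith)
      (by simp only [mem_Ioi] at hA ⊢; nlinarith) (by simp only [mem_Ioi] at hA' ⊢; nlinarith)
      (mul_lt_mul_of_pos_right hlt hK₁)
  have hT : StrictMonoOn
      (fun A => A * K₁ / (1 + K₂ + A * K₁) * (1 - ρ * K₂ / (1 + K₂)) + ρ * K₂ / (1 + K₂))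
      (Ioi 0) :=
    fun A hA A' hA' hlt => by
      simpa using mul_lt_mul_of_pos_right (hoccupancy hA hA' hlt) hslope
  exact hT.comp_strictAntiOn hAqss fun B hB => hpos B hB

/-- The transcription function `T` of the reduced IT-MFL model is strictly
decreasing on `[0, ∞)`. -/
theorem transcription_strictAntiOn (K₁ K₂ Kd Atot gtot ρ : ℝ)
    (hK₁ : 0 < K₁) (hK₂ : 0 ≤ K₂) (hKd : 0 < Kd)
    (hAtot : 0 < Atot) (hgtot : 0 < gtot)
    (hρ : 0 ≤ ρ) (hρK₂ : ρ * K₂ < 1 + K₂)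
    (Aqss : ℝ → ℝ)
    (hpos : ∀ B : ℝ, 0 ≤ B → 0 < Aqss B)
    (hroot : ∀ B : ℝ, 0 ≤ B →
      K₁ * (Aqss B) ^ 3
        + (1 + K₂ + (gtot + B - Atot + Kd) * K₁) * (Aqss B) ^ 2
        + ((1 + K₂) * (B - Atot + Kd) + (gtot - Atot) * Kd * K₁) * (Aqss B)
        + (-((1 + K₂) * Atot * Kd)) = 0) :
    StrictAntiOn
      (fun B : ℝ =>
        (Aqss B * K₁ / (1 + K₂ + Aqss B * K₁)) * (1 - ρ * K₂ / (1 + K₂))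
          + ρ * K₂ / (1 + K₂))
      (Set.Ici 0) :=
  transcription_strictAntiOn_general K₁ K₂ Kd Atot gtot ρ hK₁ hK₂ hKd hgtot hρK₂ Aqss hpos hroot
end

section
/- Let K₁ > 0, K₂ ≥ 0, K_d > 0, A_tot > 0, g_tot > 0, and let ρ ≥ 0 satisfy ρ·K₂ < 1 + K₂. With A_qss(B) the unique positive root of the cubic Φ_B (coefficients a = K₁, b = 1 + K₂ + (g_tot + B − A_tot + K_d)·K₁, c = (1 + K₂)·(B − A_tot + K_d) + (g_tot − A_tot)·K_d·K₁, d = −(1 + K₂)·A_tot·K_d) and T(B) = (A_qss(B)·K₁/(1 + K₂ + A_qss(B)·K₁))·(1 − ρ·K₂/(1 + K₂)) + ρ·K₂/(1 + K₂), there exists a unique B* ≥ 0 with T(B*) = B*. -/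
/-!
Clearing denominators, the cubic `Φ_B(A) = 0` is the activator conservation law
`A + A B / (A + K_d) + g_tot K₁ A / (K₁ A + 1 + K₂) = A_tot`, whose left side is strictly
increasing in `A` and in `B`. Hence `A_qss` is strictly decreasing, and so is
`T = τ ∘ A_qss`, where `τ` is increasing: `T` has at most one fixed point.

For existence, `A_qss` is not known to be continuous, so we work in the variable `A`: the
conservation law is affine in `B`, solved by `B = β(A)`, with `β(A) → ∞` as `A → 0⁺` and
`β(A_qss 0) = 0`. As `0 ≤ τ ≤ 1`, the intermediate value theorem gives `A` with `τ A = β A`,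
and then `B = β A` is a fixed point of `T` because `A_qss (β A) = A`.
-/

open Set Filter Topology

noncomputable section

lemma StrictAntiOn.eq_of_isFixedPt {α : Type*} [LinearOrder α] {f : α → α} {s : Set α}
    (hf : StrictAntiOn f s) {a b : α} (ha : a ∈ s) (hb : b ∈ s) (hfa : Function.IsFixedPt f a)
    (hfb : Function.IsFixedPt f b) : a = b := by
  by_contra hne
  rcases lt_or_gt_of_ne hne with hab | hab
  · exact (hf ha hb hab).not_gt (by rwa [hfa, hfb])
  · exact (hf hb ha hab).not_gt (by rwa [hfa, hfb])

namespace ITMFL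

def occupancy (K₁ K₂ A : ℝ) : ℝ := A * K₁ / (1 + K₂ + A * K₁)

def transcription (K₁ K₂ p A : ℝ) : ℝ := occupancy K₁ K₂ A * (1 - p) + p

/-- Free, target-bound and promoter-bound activator; `Φ_B(A) = 0` says it equals `A_tot`. -/
def activatorTotal (K₁ K₂ Kd gtot A B : ℝ) : ℝ :=
  A + A * B / (A + Kd) + gtot * K₁ * A / (K₁ * A + 1 + K₂)

/-- The `B` solving `activatorTotal A B = A_tot`; it inverts `B ↦ A_qss B`. -/
def targetLevel (K₁ K₂ Kd gtot Atot A : ℝ) : ℝ :=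
  (Atot - activatorTotal K₁ K₂ Kd gtot A 0) * (A + Kd) / A

section Transcription

variable {K₁ K₂ p : ℝ}

lemma occupancy_strictMonoOn (hK₁ : 0 < K₁) (hK₂ : 0 ≤ K₂) :
    StrictMonoOn (occupancy K₁ K₂) (Ici 0) := by
  intro x hx y hy hxy
  rw [mem_Ici] at hx hy
  unfold occupancy
  rw [div_lt_div_iff₀ (by positivity) (by positivity)]
  nlinarith [mul_pos (mul_pos hK₁ (by positivity : (0 : ℝ) < 1 + K₂)) (sub_pos.2 hxy)]

lemma occupancy_mem_Icc (hK₁ : 0 ≤ K₁) (hK₂ : 0 ≤ K₂) {A : ℝ} (hA : 0 ≤ A) :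
    occupancy K₁ K₂ A ∈ Icc 0 1 :=
  ⟨by unfold occupancy; positivity,
    div_le_one_of_le₀ (by linarith) (by positivity)⟩

lemma transcription_strictMonoOn (hK₁ : 0 < K₁) (hK₂ : 0 ≤ K₂) (hp : p < 1) :
    StrictMonoOn (transcription K₁ K₂ p) (Ici 0) := fun _ hx _ hy hxy =>
  add_lt_add_left (mul_lt_mul_of_pos_right (occupancy_strictMonoOn hK₁ hK₂ hx hy hxy)
    (sub_pos.2 hp)) p

lemma transcription_mem_Icc (hK₁ : 0 ≤ K₁) (hK₂ : 0 ≤ K₂) (hp₀ : 0 ≤ p) (hp₁ : p ≤ 1)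
    {A : ℝ} (hA : 0 ≤ A) : transcription K₁ K₂ p A ∈ Icc 0 1 := by
  obtain ⟨hs₀, hs₁⟩ := occupancy_mem_Icc hK₁ hK₂ hA
  unfold transcription
  constructor <;> nlinarith

end Transcription

section ActivatorTotal

variable {K₁ K₂ Kd gtot Atot : ℝ}

lemma activatorTotal_eq_of_cubic_eq_zero (hK₁ : 0 ≤ K₁) (hK₂ : 0 ≤ K₂) (hKd : 0 ≤ Kd)
    {A B : ℝ} (hA : 0 < A)
    (h : K₁ * A ^ 3 + (1 + K₂ + (gtot + B - Atot + Kd) * K₁) * A ^ 2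
        + ((1 + K₂) * (B - Atot + Kd) + (gtot - Atot) * Kd * K₁) * A
        + (-((1 + K₂) * Atot * Kd)) = 0) :
    activatorTotal K₁ K₂ Kd gtot A B = Atot := by
  have : A + Kd ≠ 0 := by positivity
  have : K₁ * A + 1 + K₂ ≠ 0 := by positivity
  unfold activatorTotal
  field_simp
  linear_combination h

lemma activatorTotal_strictMonoOn_left (hK₁ : 0 ≤ K₁) (hK₂ : 0 ≤ K₂) (hKd : 0 ≤ Kd)
    (hgtot : 0 ≤ gtot) {B : ℝ} (hB : 0 ≤ B) :
    StrictMonoOn (fun A => activatorTotal K₁ K₂ Kd gtot A B) (Ioi 0) := by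
  intro x hx y hy hxy
  rw [mem_Ioi] at hx hy
  have htarget : x * B / (x + Kd) ≤ y * B / (y + Kd) := by
    rw [div_le_div_iff₀ (by positivity) (by positivity)]
    nlinarith [mul_nonneg (mul_nonneg hB hKd) (sub_pos.2 hxy).le]
  have hpromoter : gtot * K₁ * x / (K₁ * x + 1 + K₂) ≤ gtot * K₁ * y / (K₁ * y + 1 + K₂) := by
    rw [div_le_div_iff₀ (by positivity) (by positivity)]
    nlinarith [mul_nonneg (mul_nonneg (mul_nonneg hgtot hK₁) (by positivity : (0 : ℝ) ≤ 1 + K₂))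
      (sub_pos.2 hxy).le]
  simp only [activatorTotal]
  linarith

lemma activatorTotal_strictMono_right (hKd : 0 ≤ Kd) {A : ℝ} (hA : 0 < A) :
    StrictMono (activatorTotal K₁ K₂ Kd gtot A) := fun b c hbc => by
  have : A * b / (A + Kd) < A * c / (A + Kd) := by gcongr
  simp only [activatorTotal]
  linarith

lemma activatorTotal_targetLevel (hKd : 0 ≤ Kd) {A : ℝ} (hA : 0 < A) :
    activatorTotal K₁ K₂ Kd gtot A (targetLevel K₁ K₂ Kd gtot Atot A) = Atot := by
  have : A + Kd ≠ 0 := by positivity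
  unfold targetLevel activatorTotal
  field_simp
  ring

lemma tendsto_targetLevel_nhdsGT_zero (hK₂ : 0 ≤ K₂) (hKd : 0 < Kd) (hAtot : 0 < Atot) :
    Tendsto (targetLevel K₁ K₂ Kd gtot Atot) (𝓝[>] 0) atTop := by
  have hcont : ContinuousAt (fun A => (Atot - activatorTotal K₁ K₂ Kd gtot A 0) * (A + Kd)) 0 := by
    unfold activatorTotal
    fun_prop (disch := simp only [mul_zero, zero_add]; positivity)
  have hlim : Tendsto (fun A => (Atot - activatorTotal K₁ K₂ Kd gtot A 0) * (A + Kd))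
      (𝓝[>] 0) (𝓝 (Atot * Kd)) := by
    simpa [activatorTotal] using hcont.tendsto.mono_left nhdsWithin_le_nhds
  exact (hlim.pos_mul_atTop (by positivity) tendsto_inv_nhdsGT_zero).congr fun A =>
    (div_eq_mul_inv _ _).symm

lemma exists_transcription_eq_targetLevel {p : ℝ} (hK₁ : 0 ≤ K₁) (hK₂ : 0 ≤ K₂) (hKd : 0 < Kd)
    (hAtot : 0 < Atot) (hp₀ : 0 ≤ p) (hp₁ : p ≤ 1) {A₀ : ℝ} (hA₀ : 0 < A₀)
    (h₀ : activatorTotal K₁ K₂ Kd gtot A₀ 0 = Atot) :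
    ∃ A, 0 < A ∧ transcription K₁ K₂ p A = targetLevel K₁ K₂ Kd gtot Atot A := by
  obtain ⟨A₁, hA₁large, hA₁pos, hA₁lt⟩ :=
    (((tendsto_targetLevel_nhdsGT_zero hK₂ hKd hAtot).eventually_ge_atTop 1).and
      (Ioo_mem_nhdsGT hA₀)).exists
  set G := fun A => transcription K₁ K₂ p A - targetLevel K₁ K₂ Kd gtot Atot A
  have hG : ContinuousOn G (Ioi 0) := by
    simp only [G, transcription, occupancy, targetLevel, activatorTotal]
    fun_prop (disch := intro x hx; rw [mem_Ioi] at hx; positivity)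
  have hG₁ : G A₁ ≤ 0 :=
    sub_nonpos.2 ((transcription_mem_Icc hK₁ hK₂ hp₀ hp₁ hA₁pos.le).2.trans hA₁large)
  have hG₀ : 0 ≤ G A₀ := by
    simpa [G, targetLevel, h₀] using (transcription_mem_Icc hK₁ hK₂ hp₀ hp₁ hA₀.le).1
  obtain ⟨A, hA, hGA⟩ := intermediate_value_Icc hA₁lt.le
    (hG.mono fun x hx => hA₁pos.trans_le hx.1) ⟨hG₁, hG₀⟩
  exact ⟨A, hA₁pos.trans_le hA.1, sub_eq_zero.1 hGA⟩

end ActivatorTotal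

section QuasiSteadyState

variable {K₁ K₂ Kd gtot Atot : ℝ} {f : ℝ → ℝ}

lemma strictAntiOn_of_activatorTotal_eq (hK₁ : 0 ≤ K₁) (hK₂ : 0 ≤ K₂) (hKd : 0 ≤ Kd)
    (hgtot : 0 ≤ gtot)
    (hf : ∀ B, 0 ≤ B → 0 < f B ∧ activatorTotal K₁ K₂ Kd gtot (f B) B = Atot) :
    StrictAntiOn f (Ici 0) := by
  intro b hb c hc hbc
  obtain ⟨hfb, hb'⟩ := hf b hb
  obtain ⟨hfc, hc'⟩ := hf c hc
  refine ((activatorTotal_strictMonoOn_left hK₁ hK₂ hKd hgtot hb).lt_iff_lt hfc hfb).1 ?_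
  calc activatorTotal K₁ K₂ Kd gtot (f c) b < activatorTotal K₁ K₂ Kd gtot (f c) c :=
        activatorTotal_strictMono_right hKd hfc hbc
    _ = activatorTotal K₁ K₂ Kd gtot (f b) b := by rw [hb', hc']

lemma apply_targetLevel_eq (hK₁ : 0 ≤ K₁) (hK₂ : 0 ≤ K₂) (hKd : 0 ≤ Kd) (hgtot : 0 ≤ gtot)
    (hf : ∀ B, 0 ≤ B → 0 < f B ∧ activatorTotal K₁ K₂ Kd gtot (f B) B = Atot)
    {A : ℝ} (hA : 0 < A) (hB : 0 ≤ targetLevel K₁ K₂ Kd gtot Atot A) :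
    f (targetLevel K₁ K₂ Kd gtot Atot A) = A :=
  (activatorTotal_strictMonoOn_left hK₁ hK₂ hKd hgtot hB).injOn (hf _ hB).1 hA
    ((hf _ hB).2.trans (activatorTotal_targetLevel hKd hA).symm)

end QuasiSteadyState

end ITMFL

end

open ITMFL

/-- The transcription function `T` of the reduced IT-MFL model has a unique
non-negative fixed point, which determines the unique non-negative
equilibrium of the reduced model. -/
theorem transcription_unique_fixed_point (K₁ K₂ Kd Atot gtot ρ : ℝ)
    (hK₁ : 0 < K₁) (hK₂ : 0 ≤ K₂) (hKd : 0 < Kd)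
    (hAtot : 0 < Atot) (hgtot : 0 < gtot)
    (hρ : 0 ≤ ρ) (hρK₂ : ρ * K₂ < 1 + K₂)
    (Aqss : ℝ → ℝ)
    (hpos : ∀ B : ℝ, 0 ≤ B → 0 < Aqss B)
    (hroot : ∀ B : ℝ, 0 ≤ B →
      K₁ * (Aqss B) ^ 3
        + (1 + K₂ + (gtot + B - Atot + Kd) * K₁) * (Aqss B) ^ 2
        + ((1 + K₂) * (B - Atot + Kd) + (gtot - Atot) * Kd * K₁) * (Aqss B)
        + (-((1 + K₂) * Atot * Kd)) = 0) :
    ∃! B : ℝ, 0 ≤ B ∧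
      (Aqss B * K₁ / (1 + K₂ + Aqss B * K₁)) * (1 - ρ * K₂ / (1 + K₂))
          + ρ * K₂ / (1 + K₂) = B := by
  set p := ρ * K₂ / (1 + K₂)
  have hp₀ : 0 ≤ p := by positivity
  have hp₁ : p < 1 := (div_lt_one (by positivity)).2 hρK₂
  have hqss : ∀ B, 0 ≤ B → 0 < Aqss B ∧ activatorTotal K₁ K₂ Kd gtot (Aqss B) B = Atot :=
    fun B hB => ⟨hpos B hB,
      activatorTotal_eq_of_cubic_eq_zero hK₁.le hK₂ hKd.le (hpos B hB) (hroot B hB)⟩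
  change ∃! B, 0 ≤ B ∧ transcription K₁ K₂ p (Aqss B) = B
  obtain ⟨A, hA, hfix⟩ := exists_transcription_eq_targetLevel hK₁.le hK₂ hKd hAtot hp₀ hp₁.le
    (hqss 0 le_rfl).1 (hqss 0 le_rfl).2
  have hB : 0 ≤ targetLevel K₁ K₂ Kd gtot Atot A :=
    hfix ▸ (transcription_mem_Icc hK₁.le hK₂ hp₀ hp₁.le hA.le).1
  have hqssB := apply_targetLevel_eq hK₁.le hK₂ hKd.le hgtot.le hqss hA hB
  have hanti : StrictAntiOn (transcription K₁ K₂ p ∘ Aqss) (Ici 0) :=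
    (transcription_strictMonoOn hK₁ hK₂ hp₁).comp_strictAntiOn
      (strictAntiOn_of_activatorTotal_eq hK₁.le hK₂ hKd.le hgtot.le hqss)
      fun B hB => (hpos B hB).le
  refine ⟨_, ⟨hB, by rw [hqssB, hfix]⟩, fun B ⟨hB', hBfix⟩ => ?_⟩
  exact hanti.eq_of_isFixedPt hB' hB hBfix (by simp [Function.IsFixedPt, hqssB, hfix])
end
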